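/- Let I = (a,b) be a bounded open interval in ℝ with midpoint c_I = (a+b)/2, let f : I → ℝ be non-increasing and right continuous, and let s ∈ (0,1/2]. Let M > 0 be a real number such that J(f, (a',b'), s) ≤ M for every pair a', b' with a ≤ a' < b' ≤ b. Then for every α > 0, |{t ∈ I : f(t) − f(c_I) ≥ α}| ≤ ((1−s)/(2s)) · |I| · exp(−α·log(1/s − 1)/(2M)), where |·| denotes one-dimensional Lebesgue measure. -/
import Mathlib

open MeasureTheory Set

/-- The John–Strömberg functional
`J(f,E,s) = inf_{c ∈ ℝ} inf {α ≥ 0 : μ({x ∈ E : |f(x) − c| > α}) < s·μ(E)}`. -/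
noncomputable def JS {X : Type*} [MeasurableSpace X] (μ : Measure X)
    (f : X → ℝ) (E : Set X) (s : ℝ) : ℝ :=
  sInf {α : ℝ | 0 ≤ α ∧ ∃ c : ℝ, μ {x ∈ E | α < |f x - c|} < ENNReal.ofReal s * μ E}

set_option maxHeartbeats 800000 in
/-- Oscillation bound from the John–Strömberg functional for antitone functions. -/
lemma JS_osc (f : ℝ → ℝ) (a b a' b' u v s M : ℝ)
    (hmono : AntitoneOn f (Set.Ioo a b))
    (hs0 : 0 < s) (hM : 0 < M)
    (ha' : a ≤ a') (hb' : b' ≤ b)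
    (hau : a' < u) (huv : u ≤ v) (hvb : v < b')
    (hu : u - a' = s * (b' - a')) (hv : b' - v = s * (b' - a'))
    (hJ : JS volume f (Set.Ioo a' b') s ≤ M) :
    f u - f v ≤ 2 * M := by
  have hab' : a' < b' := hau.trans (lt_of_le_of_lt huv hvb)
  have hQ0 : 0 < s * (b' - a') := by linarith
  have hQδ : s * (b' - a') < b' - a' := by linarith
  have humem : u ∈ Ioo a b := ⟨by linarith, by linarith⟩
  have hvmem : v ∈ Ioo a b := ⟨by linarith, by linarith⟩
  refine le_of_forall_pos_le_add fun ε hε => ?_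
  -- the JS set is nonempty
  have hSne : {β : ℝ | 0 ≤ β ∧ ∃ c : ℝ,
      volume {x ∈ Ioo a' b' | β < |f x - c|} < ENNReal.ofReal s * volume (Ioo a' b')}.Nonempty := by
    obtain ⟨u0, hu0⟩ : ∃ u0 : ℝ, u0 = a' + s * (b' - a') / 4 := ⟨_, rfl⟩
    obtain ⟨v0, hv0⟩ : ∃ v0 : ℝ, v0 = b' - s * (b' - a') / 4 := ⟨_, rfl⟩
    have hu0v0 : u0 ≤ v0 := by linarith
    have hu0mem : u0 ∈ Ioo a b := ⟨by linarith, by linarith⟩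
    have hv0mem : v0 ∈ Ioo a b := ⟨by linarith, by linarith⟩
    have hfuv : f v0 ≤ f u0 := hmono hu0mem hv0mem hu0v0
    refine ⟨(f u0 - f v0) / 2, by linarith, (f u0 + f v0) / 2, ?_⟩
    have hsub : {x ∈ Ioo a' b' | (f u0 - f v0) / 2 < |f x - (f u0 + f v0) / 2|} ⊆
        Ioo a' u0 ∪ Ioo v0 b' := by
      rintro t ⟨⟨ht1, ht2⟩, ht3⟩
      by_contra hcon
      simp only [mem_union, mem_Ioo, not_or, not_and_or, not_lt] at hcon
      have htu0 : u0 ≤ t := by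
        rcases hcon.1 with h | h
        · exact absurd ht1 (by linarith)
        · exact h
      have htv0 : t ≤ v0 := by
        rcases hcon.2 with h | h
        · exact h
        · exact absurd ht2 (by linarith)
      have htmem : t ∈ Ioo a b := ⟨by linarith, by linarith⟩
      have h1 : f t ≤ f u0 := hmono hu0mem htmem htu0
      have h2 : f v0 ≤ f t := hmono htmem hv0mem htv0
      have : |f t - (f u0 + f v0) / 2| ≤ (f u0 - f v0) / 2 := abs_le.2 ⟨by linarith, by linarith⟩
      linarith
    calc volume {x ∈ Ioo a' b' | (f u0 - f v0) / 2 < |f x - (f u0 + f v0) / 2|}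
        ≤ volume (Ioo a' u0 ∪ Ioo v0 b') := measure_mono hsub
      _ ≤ volume (Ioo a' u0) + volume (Ioo v0 b') := measure_union_le _ _
      _ = ENNReal.ofReal (s * (b' - a') / 4) + ENNReal.ofReal (s * (b' - a') / 4) := by
          rw [Real.volume_Ioo, Real.volume_Ioo,
            show u0 - a' = s * (b' - a') / 4 by linarith,
            show b' - v0 = s * (b' - a') / 4 by linarith]
      _ = ENNReal.ofReal (s * (b' - a') / 2) := by
          rw [← ENNReal.ofReal_add (by positivity) (by positivity)]; congr 1; ring
      _ < ENNReal.ofReal s * volume (Ioo a' b') := by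
          rw [Real.volume_Ioo, ← ENNReal.ofReal_mul hs0.le]
          exact ENNReal.ofReal_lt_ofReal_iff (by positivity) |>.2 (by linarith)
  obtain ⟨β, hβS, hβlt⟩ := Real.lt_sInf_add_pos hSne (half_pos hε)
  obtain ⟨hβ0, c, hc⟩ := hβS
  have hβM : β < M + ε / 2 := by
    rw [JS] at hJ
    exact lt_of_lt_of_le hβlt (by linarith)
  have hmeq : ENNReal.ofReal s * volume (Ioo a' b') = ENNReal.ofReal (s * (b' - a')) := by
    rw [Real.volume_Ioo, ← ENNReal.ofReal_mul hs0.le]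
  -- f u ≤ c + β
  have hfu : f u ≤ c + β := by
    by_contra hcon
    push_neg at hcon
    have hsub : Ioc a' u ⊆ {x ∈ Ioo a' b' | β < |f x - c|} := by
      rintro t ⟨ht1, ht2⟩
      have htmem : t ∈ Ioo a b := ⟨by linarith, by linarith⟩
      have hft : f u ≤ f t := hmono htmem humem ht2
      exact ⟨⟨ht1, by linarith⟩, lt_of_lt_of_le (by linarith) (le_abs_self _)⟩
    have h1 : ENNReal.ofReal (s * (b' - a')) ≤ volume {x ∈ Ioo a' b' | β < |f x - c|} := by
      calc ENNReal.ofReal (s * (b' - a')) = volume (Ioc a' u) := by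
            rw [Real.volume_Ioc]; congr 1; linarith
        _ ≤ _ := measure_mono hsub
    exact absurd (lt_of_le_of_lt h1 (hmeq ▸ hc)) (lt_irrefl _)
  -- c - β ≤ f v
  have hfv : c - β ≤ f v := by
    by_contra hcon
    push_neg at hcon
    have hsub : Ico v b' ⊆ {x ∈ Ioo a' b' | β < |f x - c|} := by
      rintro t ⟨ht1, ht2⟩
      have htmem : t ∈ Ioo a b := ⟨by linarith, by linarith⟩
      have hft : f t ≤ f v := hmono hvmem htmem ht1
      have habs : c - f t ≤ |f t - c| := by rw [abs_sub_comm]; exact le_abs_self _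
      exact ⟨⟨by linarith, ht2⟩, lt_of_lt_of_le (by linarith) habs⟩
    have h1 : ENNReal.ofReal (s * (b' - a')) ≤ volume {x ∈ Ioo a' b' | β < |f x - c|} := by
      calc ENNReal.ofReal (s * (b' - a')) = volume (Ico v b') := by
            rw [Real.volume_Ico]; congr 1; linarith
        _ ≤ _ := measure_mono hsub
    exact absurd (lt_of_le_of_lt h1 (hmeq ▸ hc)) (lt_irrefl _)
  linarith

set_option maxHeartbeats 1000000 in
theorem stmt15 (a b : ℝ) (hab : a < b)
    (f : ℝ → ℝ) (hmono : AntitoneOn f (Set.Ioo a b))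
    (hrc : ∀ t ∈ Set.Ioo a b, ContinuousWithinAt f (Set.Ioo t b) t)
    (s : ℝ) (hs : s ∈ Set.Ioc (0:ℝ) (1/2))
    (M : ℝ) (hM : 0 < M)
    (hJ : ∀ a' b' : ℝ, a ≤ a' → a' < b' → b' ≤ b → JS volume f (Set.Ioo a' b') s ≤ M) :
    ∀ α : ℝ, 0 < α →
      volume {t ∈ Set.Ioo a b | α ≤ f t - f ((a + b) / 2)} ≤
        ENNReal.ofReal ((1 - s) / (2 * s) * (b - a) *
          Real.exp (-(α * Real.log (1 / s - 1)) / (2 * M))) := by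
  intro α hα
  obtain ⟨hs0, hs2⟩ := hs
  have hs1 : s < 1 := by linarith
  have h1s : 0 < 1 - s := by linarith
  obtain ⟨r, hrdef⟩ : ∃ r : ℝ, r = s / (1 - s) := ⟨_, rfl⟩
  have hr0 : 0 < r := hrdef ▸ div_pos hs0 h1s
  have hr1 : r ≤ 1 := by rw [hrdef, div_le_one h1s]; linarith
  have hba : 0 < b - a := by linarith
  obtain ⟨X, hXdef⟩ : ∃ X : ℕ → ℝ, X = fun n => a + r ^ n * ((b - a) / 2) := ⟨_, rfl⟩
  have hrn : ∀ n : ℕ, 0 < r ^ n := fun n => pow_pos hr0 n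
  have hrn1 : ∀ n : ℕ, r ^ n ≤ 1 := fun n => pow_le_one₀ hr0.le hr1
  have hXeq : ∀ n : ℕ, X n = a + r ^ n * ((b - a) / 2) := fun n => by rw [hXdef]
  have hXmem : ∀ n, X n ∈ Ioo a b := by
    intro n
    rw [hXeq n]
    constructor
    · nlinarith [hrn n]
    · nlinarith [hrn1 n]
  have hX0 : X 0 = (a + b) / 2 := by rw [hXeq 0]; ring
  have hiter : ∀ n : ℕ, f (X n) ≤ f ((a + b) / 2) + 2 * M * n := by
    intro n
    induction n with
    | zero => rw [hX0]; simp
    | succ n ih =>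
      obtain ⟨b', hb'def⟩ : ∃ b' : ℝ, b' = a + r ^ n * (b - a) / (2 * (1 - s)) := ⟨_, rfl⟩
      have hPpos : 0 < r ^ n * (b - a) / (2 * (1 - s)) :=
        div_pos (mul_pos (hrn n) hba) (by linarith)
      have hab' : a < b' := by rw [hb'def]; linarith
      have hb'b : b' ≤ b := by
        rw [hb'def]
        have h2 : r ^ n * (b - a) / (2 * (1 - s)) ≤ b - a := by
          rw [div_le_iff₀ (by linarith)]
          nlinarith [hrn1 n]
        linarith
      have hu : X (n + 1) - a = s * (b' - a) := by
        rw [hXeq (n + 1), hb'def, pow_succ, hrdef]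
        field_simp
        ring
      have hv : b' - X n = s * (b' - a) := by
        rw [hXeq n, hb'def, hrdef]
        field_simp
        ring
      have hQpos : 0 < s * (b' - a) := mul_pos hs0 (by linarith)
      have hQle : s * (b' - a) ≤ (b' - a) / 2 := by
        have := mul_le_mul_of_nonneg_right hs2 (le_of_lt (show (0:ℝ) < b' - a by linarith))
        linarith
      have hau : a < X (n + 1) := by linarith
      have hvb : X n < b' := by linarith
      have huv : X (n + 1) ≤ X n := by linarith
      have hk := JS_osc f a b a b' (X (n + 1)) (X n) s M hmono hs0 hM le_rfl hb'b
        hau huv hvb hu hv (hJ a b' le_rfl hab' hb'b)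
      push_cast
      linarith
  -- choose n with 2Mn < α ≤ 2M(n+1)
  have h2M : 0 < 2 * M := by linarith
  obtain ⟨x, hxdef⟩ : ∃ x : ℝ, x = α / (2 * M) := ⟨_, rfl⟩
  have hx0 : 0 < x := hxdef ▸ div_pos hα h2M
  obtain ⟨n, hndef⟩ : ∃ n : ℕ, n = ⌈x⌉₊ - 1 := ⟨_, rfl⟩
  have hceil : 1 ≤ ⌈x⌉₊ := Nat.one_le_ceil_iff.2 hx0
  have hnx : (n : ℝ) < x := by
    have h1 : (⌈x⌉₊ : ℝ) < x + 1 := Nat.ceil_lt_add_one hx0.le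
    have h2 : ((n : ℕ) : ℝ) = (⌈x⌉₊ : ℝ) - 1 := by
      rw [hndef, Nat.cast_sub hceil]; simp
    linarith
  have hxn : x ≤ (n : ℝ) + 1 := by
    have h1 := Nat.le_ceil x
    have h2 : (⌈x⌉₊ : ℝ) = (n : ℝ) + 1 := by
      rw [hndef, Nat.cast_sub hceil]; push_cast; ring
    linarith
  have hMn : 2 * M * n < α := by
    have : 2 * M * x = α := by rw [hxdef]; field_simp
    nlinarith
  have hsub : {t ∈ Ioo a b | α ≤ f t - f ((a + b) / 2)} ⊆ Ioc a (X n) := by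
    rintro t ⟨⟨hta, htb⟩, hft⟩
    refine ⟨hta, ?_⟩
    by_contra hcon
    push_neg at hcon
    have h1 : f t ≤ f (X n) := hmono (hXmem n) ⟨hta, htb⟩ hcon.le
    have h2 := hiter n
    linarith
  calc volume {t ∈ Ioo a b | α ≤ f t - f ((a + b) / 2)}
      ≤ volume (Ioc a (X n)) := measure_mono hsub
    _ = ENNReal.ofReal (r ^ n * ((b - a) / 2)) := by
        rw [Real.volume_Ioc, hXeq n]; congr 1; ring
    _ ≤ _ := by
        apply ENNReal.ofReal_le_ofReal
        have hlog : Real.log (1 / s - 1) = -Real.log r := by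
          have e : (1 : ℝ) / s - 1 = r⁻¹ := by
            rw [hrdef, inv_div]
            field_simp
          rw [e, Real.log_inv]
        have hexp : Real.exp (-(α * Real.log (1 / s - 1)) / (2 * M)) = r ^ x := by
          rw [hlog, Real.rpow_def_of_pos hr0]
          congr 1
          rw [hxdef]
          field_simp
        rw [hexp]
        have hxr : r ^ x = r * r ^ (x - 1) := by
          rw [Real.rpow_sub hr0, Real.rpow_one]
          field_simp
        have hcoef : (1 - s) / (2 * s) * r = 1 / 2 := by
          rw [hrdef]
          field_simp
        have hmono' : r ^ ((n : ℝ)) ≤ r ^ (x - 1) :=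
          Real.rpow_le_rpow_of_exponent_ge hr0 hr1 (by linarith)
        calc r ^ n * ((b - a) / 2) = (b - a) / 2 * r ^ ((n : ℝ)) := by
              rw [Real.rpow_natCast]; ring
          _ ≤ (b - a) / 2 * r ^ (x - 1) :=
              mul_le_mul_of_nonneg_left hmono' (by linarith)
          _ = (1 - s) / (2 * s) * r * ((b - a) * r ^ (x - 1)) := by rw [hcoef]; ring
          _ = (1 - s) / (2 * s) * (b - a) * (r * r ^ (x - 1)) := by ring
          _ = (1 - s) / (2 * s) * (b - a) * r ^ x := by rw [← hxr]
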